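/- Let d ≥ 4 and let ρ = (ρ₁,…,ρ_{d−1}) be any vector with each ρ_i ∈ (−1,1)∖{0}. Then the star minimizes the approximate error exponent: for every tree T on d vertices, every arrangement π of ρ on T, and every arrangement σ of ρ on the star on d vertices, K̃(star, σ, ρ) ≤ K̃(T, π, ρ). -/

import Mathlib

/-!
If `u, v` are non-adjacent in a tree, the path between them has two distinct edges `e ≠ f`, and
`|ρ_{uv}| ≤ |ρ_e ρ_f|` since all correlations have modulus at most one. In the star every pair
of edges `e ≠ f` is the path of a non-edge whose correlation is exactly `ρ_e ρ_f`. So it suffices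
that `J̃(a, b)` decreases in `b²` on `b² < a²`. In the coordinates `s = 1/(1-b²)`, `t = 1/(1-a²)`
it equals the square of the secant slope of `log` on `[s, t]` times `(t-s)/(2(t-s)+1)`, up to a
factor 1/8: the first factor decreases in `s` because `log` is concave, the second because
`x/(2x+1)` increases.
-/

noncomputable def Jt (a b : ℝ) : ℝ :=
  ((1 / 2) * Real.log ((1 - b ^ 2) / (1 - a ^ 2))) ^ 2 /
    (2 * (b ^ 4 + b ^ 2) / (1 - b ^ 2) ^ 2 + 2 * (a ^ 4 + a ^ 2) / (1 - a ^ 2) ^ 2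
      - 4 * b ^ 2 * (a ^ 2 + 1) / ((1 - b ^ 2) * (1 - a ^ 2)))

/-- The approximate error exponent K̃(G,ρ): the infimum of J̃(ρ_e, ρ_{e′}) over all
non-edges e′ = {u,v} and all edges e on the (unique) path joining u and v, where the
correlation of the non-edge is the product of the edge correlations along that path. -/
noncomputable def Ktilde {V : Type*} (G : SimpleGraph V) (ρ : Sym2 V → ℝ) : ℝ :=
  sInf { x : ℝ | ∃ (u v : V) (p : G.Walk u v), p.IsPath ∧ u ≠ v ∧ ¬ G.Adj u v ∧
    ∃ e ∈ p.edges, x = Jt (ρ e) ((p.edges.map ρ).prod) }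

/-- The star graph on `Fin d`: the vertex with value 0 is the center. -/
def starGraph (d : ℕ) : SimpleGraph (Fin d) where
  Adj u v := u ≠ v ∧ (u.val = 0 ∨ v.val = 0)
  symm := by constructor; intro u v h; exact ⟨h.1.symm, h.2.symm⟩
  loopless := by constructor; intro u h; exact h.1 rfl

/-- The edge correlations induced by an arrangement `π` of the correlation vector `ρ`
on the edges of `G`. -/
noncomputable def arrange {V : Type*} (G : SimpleGraph V) {n : ℕ}
    (π : G.edgeSet ≃ Fin n) (ρ : Fin n → ℝ) : Sym2 V → ℝ := fun e =>
  letI := Classical.dec (e ∈ G.edgeSet)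
  if h : e ∈ G.edgeSet then ρ (π ⟨e, h⟩) else 0

section CrossoverProfile

open Real

/-- `Jt a b` in the coordinates `s = 1/(1-b²)`, `t = 1/(1-a²)`: the denominator of `Jt` becomes
`2(t-s)(2(t-s)+1)` and the logarithm becomes `log t - log s`. -/
noncomputable def crossoverProfile (s t : ℝ) : ℝ :=
  slope log t s ^ 2 * ((t - s) / (2 * (t - s) + 1)) / 8

lemma crossoverProfile_nonneg {s t : ℝ} (hst : s < t) : 0 ≤ crossoverProfile s t := by
  unfold crossoverProfile
  have : 0 < t - s := sub_pos.2 hst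
  positivity

lemma crossoverProfile_le_of_le {s₁ s₂ t : ℝ} (hs₁ : 0 < s₁) (hs : s₁ ≤ s₂) (hs₂ : s₂ < t) :
    crossoverProfile s₂ t ≤ crossoverProfile s₁ t := by
  have hs₂_pos : 0 < s₂ := hs₁.trans_le hs
  have hslope : slope log t s₂ ≤ slope log t s₁ :=
    strictConcaveOn_log_Ioi.concaveOn.antitoneOn_slope_lt (hs₂_pos.trans hs₂)
      ⟨hs₁, hs.trans_lt hs₂⟩ ⟨hs₂_pos, hs₂⟩ hs
  have hslope_nonneg : 0 ≤ slope log t s₂ := by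
    rw [slope_def_field]
    exact div_nonneg_of_nonpos (sub_nonpos.2 (log_le_log hs₂_pos hs₂.le)) (sub_nonpos.2 hs₂.le)
  have hratio : (t - s₂) / (2 * (t - s₂) + 1) ≤ (t - s₁) / (2 * (t - s₁) + 1) := by
    rw [div_le_div_iff₀ (by linarith) (by linarith)]
    nlinarith
  unfold crossoverProfile
  gcongr

lemma Jt_eq_crossoverProfile {a b : ℝ} (hba : b ^ 2 < a ^ 2) (ha : a ^ 2 < 1) :
    Jt a b = crossoverProfile (1 - b ^ 2)⁻¹ (1 - a ^ 2)⁻¹ := by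
  have hpa : 0 < 1 - a ^ 2 := by linarith
  have hpb : 0 < 1 - b ^ 2 := by linarith
  set t := (1 - a ^ 2)⁻¹ with ht
  set s := (1 - b ^ 2)⁻¹ with hs
  have hst : 0 < t - s := sub_pos.2 (inv_strictAnti₀ hpa (by linarith))
  have hB : 2 * (b ^ 4 + b ^ 2) / (1 - b ^ 2) ^ 2 + 2 * (a ^ 4 + a ^ 2) / (1 - a ^ 2) ^ 2
      - 4 * b ^ 2 * (a ^ 2 + 1) / ((1 - b ^ 2) * (1 - a ^ 2))
      = 2 * (t - s) * (2 * (t - s) + 1) := by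
    rw [ht, hs]
    field_simp
    ring
  have hlog : log ((1 - b ^ 2) / (1 - a ^ 2)) = log t - log s := by
    rw [log_div hpb.ne' hpa.ne', ht, hs, log_inv, log_inv]
    ring
  unfold Jt crossoverProfile
  rw [hB, hlog, slope_def_field]
  have hts : s - t ≠ 0 := by linarith
  field_simp
  ring

lemma Jt_nonneg {a b : ℝ} (hba : b ^ 2 < a ^ 2) (ha : a ^ 2 < 1) : 0 ≤ Jt a b := by
  rw [Jt_eq_crossoverProfile hba ha]
  exact crossoverProfile_nonneg (inv_strictAnti₀ (by linarith) (by linarith))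

lemma Jt_le_Jt_of_sq_le {a b c : ℝ} (hbc : b ^ 2 ≤ c ^ 2) (hca : c ^ 2 < a ^ 2) (ha : a ^ 2 < 1) :
    Jt a c ≤ Jt a b := by
  rw [Jt_eq_crossoverProfile hca ha, Jt_eq_crossoverProfile (hbc.trans_lt hca) ha]
  exact crossoverProfile_le_of_le (inv_pos.2 (by linarith)) (inv_anti₀ (by linarith) (by linarith))
    (inv_strictAnti₀ (by linarith) (by linarith))

end CrossoverProfile

lemma List.abs_prod_map_le_one {α : Type*} {l : List α} {g : α → ℝ} (hg : ∀ z ∈ l, |g z| ≤ 1) :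
    |(l.map g).prod| ≤ 1 := by
  induction l with
  | nil => simp
  | cons a l ih =>
    rw [List.map_cons, List.prod_cons, abs_mul]
    exact mul_le_one₀ (hg a (by simp)) (abs_nonneg _) (ih fun z hz => hg z (by simp [hz]))

lemma List.abs_prod_map_le_of_ne {α : Type*} [DecidableEq α] {l : List α} {g : α → ℝ}
    (hg : ∀ z ∈ l, |g z| ≤ 1) {e f : α} (he : e ∈ l) (hf : f ∈ l) (hef : e ≠ f) :
    |(l.map g).prod| ≤ |g e| * |g f| := by
  have hperm : l.Perm (e :: f :: (l.erase e).erase f) :=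
    (List.perm_cons_erase he).trans
      ((List.perm_cons_erase ((List.mem_erase_of_ne hef.symm).2 hf)).cons e)
  have hrest : |(((l.erase e).erase f).map g).prod| ≤ 1 :=
    List.abs_prod_map_le_one fun z hz => hg z (List.mem_of_mem_erase (List.mem_of_mem_erase hz))
  rw [(hperm.map g).prod_eq, List.map_cons, List.map_cons, List.prod_cons, List.prod_cons, abs_mul,
    abs_mul, ← mul_assoc]
  exact mul_le_of_le_one_right (by positivity) hrest

namespace SimpleGraph

variable {V : Type*} {G : SimpleGraph V}

lemma Walk.IsPath.exists_mem_edges_ne {u v : V} {p : G.Walk u v} (hp : p.IsPath) (huv : u ≠ v)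
    (hadj : ¬ G.Adj u v) (e : Sym2 V) : ∃ f ∈ p.edges, f ≠ e := by
  obtain ⟨f₁, f₂, l, hl⟩ : ∃ f₁ f₂ l, p.edges = f₁ :: f₂ :: l := by
    cases p with
    | nil => exact absurd rfl huv
    | cons h q =>
      cases q with
      | nil => exact absurd h hadj
      | cons => exact ⟨_, _, _, rfl⟩
  have hne : f₁ ≠ f₂ := by
    have := hp.edges_nodup
    rw [hl, List.nodup_cons, List.mem_cons, not_or] at this
    exact this.1.1
  rw [hl]
  by_cases h : f₁ = e
  · exact ⟨f₂, by simp, h ▸ hne.symm⟩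
  · exact ⟨f₁, by simp, h⟩

lemma exists_ne_not_adj_of_colorable [Fintype V] {n : ℕ} (hG : G.Colorable n)
    (hn : n < Fintype.card V) : ∃ u v, u ≠ v ∧ ¬ G.Adj u v := by
  obtain ⟨C⟩ := hG
  obtain ⟨u, v, huv, hC⟩ := Fintype.exists_ne_map_eq_of_card_lt C (by simpa using hn)
  exact ⟨u, v, huv, fun h => C.valid h hC⟩

end SimpleGraph

/-- The set whose infimum is `Ktilde G ρ`. -/
def crossoverRates {V : Type*} (G : SimpleGraph V) (ρ : Sym2 V → ℝ) : Set ℝ :=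
  { x : ℝ | ∃ (u v : V) (p : G.Walk u v), p.IsPath ∧ u ≠ v ∧ ¬ G.Adj u v ∧
    ∃ e ∈ p.edges, x = Jt (ρ e) ((p.edges.map ρ).prod) }

section CrossoverRates

variable {V : Type*} {G : SimpleGraph V} {n : ℕ}

lemma arrange_of_mem (π : G.edgeSet ≃ Fin n) (ρ : Fin n → ℝ) {e : Sym2 V} (he : e ∈ G.edgeSet) :
    arrange G π ρ e = ρ (π ⟨e, he⟩) :=
  dif_pos he

lemma arrange_symm_apply (π : G.edgeSet ≃ Fin n) (ρ : Fin n → ℝ) (i : Fin n) :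
    arrange G π ρ (π.symm i) = ρ i := by
  rw [arrange_of_mem π ρ (π.symm i).2, Subtype.coe_eta, Equiv.apply_symm_apply]

/-- `i` and `j` index two distinct edges of the path that `x` comes from. -/
lemma exists_Jt_eq_of_mem_crossoverRates (π : G.edgeSet ≃ Fin n) {ρ : Fin n → ℝ}
    (hρ : ∀ i, |ρ i| ≤ 1) {x : ℝ} (hx : x ∈ crossoverRates G (arrange G π ρ)) :
    ∃ i j, i ≠ j ∧ ∃ b, b ^ 2 ≤ (ρ i * ρ j) ^ 2 ∧ x = Jt (ρ i) b := by
  classical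
  obtain ⟨u, v, p, hp, huv, hadj, e, he, rfl⟩ := hx
  obtain ⟨f, hf, hfe⟩ := hp.exists_mem_edges_ne huv hadj e
  have hE {g} (hg : g ∈ p.edges) : g ∈ G.edgeSet := p.edges_subset_edgeSet hg
  refine ⟨π ⟨e, hE he⟩, π ⟨f, hE hf⟩, fun h => hfe (congrArg Subtype.val (π.injective h)).symm,
    _, ?_, by rw [arrange_of_mem π ρ (hE he)]⟩
  rw [sq_le_sq, abs_mul, ← arrange_of_mem π ρ (hE he), ← arrange_of_mem π ρ (hE hf)]
  refine List.abs_prod_map_le_of_ne (fun z hz => ?_) he hf hfe.symm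
  rw [arrange_of_mem π ρ (hE hz)]
  exact hρ _

lemma SimpleGraph.Connected.crossoverRates_nonempty (hG : G.Connected) (ρ : Sym2 V → ℝ)
    {u v : V} (huv : u ≠ v) (hadj : ¬ G.Adj u v) : (crossoverRates G ρ).Nonempty := by
  obtain ⟨p, hp⟩ := hG.exists_isPath u v
  cases p with
  | nil => exact absurd rfl huv
  | @cons _ w _ _ _ => exact ⟨_, u, v, _, hp, huv, hadj, s(u, w), by simp, rfl⟩

lemma Jt_mem_crossoverRates_of_adj (ρ : Sym2 V → ℝ) {c u w : V} (hu : G.Adj c u)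
    (hw : G.Adj c w) (huw : u ≠ w) (hadj : ¬ G.Adj u w) :
    Jt (ρ s(c, u)) (ρ s(c, u) * ρ s(c, w)) ∈ crossoverRates G ρ := by
  refine ⟨u, w, .cons hu.symm (.cons hw .nil), ?_, huw, hadj, s(u, c), by simp, ?_⟩
  · simp [SimpleGraph.Walk.isPath_def, hu.ne', huw, hw.ne]
  · simp [Sym2.eq_swap]

end CrossoverRates

lemma exists_eq_center_of_mem_edgeSet_starGraph {d : ℕ} (hd : 0 < d) {e : Sym2 (Fin d)}
    (he : e ∈ (starGraph d).edgeSet) :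
    ∃ w, (starGraph d).Adj ⟨0, hd⟩ w ∧ e = s(⟨0, hd⟩, w) := by
  induction e with
  | _ u v =>
    obtain ⟨huv, hu | hv⟩ := he
    · obtain rfl : u = ⟨0, hd⟩ := Fin.ext hu
      exact ⟨v, ⟨huv, Or.inl rfl⟩, rfl⟩
    · obtain rfl : v = ⟨0, hd⟩ := Fin.ext hv
      exact ⟨u, ⟨huv.symm, Or.inl rfl⟩, Sym2.eq_swap⟩

lemma Jt_mem_crossoverRates_starGraph {d n : ℕ} (hd : 0 < d)
    (σ : (starGraph d).edgeSet ≃ Fin n) (ρ : Fin n → ℝ) {i j : Fin n} (hij : i ≠ j) :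
    Jt (ρ i) (ρ i * ρ j) ∈ crossoverRates (starGraph d) (arrange (starGraph d) σ ρ) := by
  obtain ⟨u, hu, hiu⟩ := exists_eq_center_of_mem_edgeSet_starGraph hd (σ.symm i).2
  obtain ⟨w, hw, hjw⟩ := exists_eq_center_of_mem_edgeSet_starGraph hd (σ.symm j).2
  have huw : u ≠ w := by
    rintro rfl
    exact hij (σ.symm.injective (Subtype.ext (hiu.trans hjw.symm)))
  have hadj : ¬ (starGraph d).Adj u w := by
    rintro ⟨-, hu0 | hw0⟩
    · exact hu.1 (Fin.ext hu0.symm)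
    · exact hw.1 (Fin.ext hw0.symm)
  have h := Jt_mem_crossoverRates_of_adj (arrange (starGraph d) σ ρ) hu hw huw hadj
  rwa [← hiu, ← hjw, arrange_symm_apply, arrange_symm_apply] at h

/-- The star minimizes the approximate error exponent among all trees on d ≥ 4 vertices,
for any fixed vector of correlation coefficients and any arrangements. -/
theorem star_minimizes (d : ℕ) (hd : 4 ≤ d) (ρ : Fin (d - 1) → ℝ)
    (hρ : ∀ i, ρ i ∈ Set.Ioo (-1 : ℝ) 1 ∧ ρ i ≠ 0)
    (T : SimpleGraph (Fin d)) (hT : T.IsTree)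
    (π : T.edgeSet ≃ Fin (d - 1)) (σ : (starGraph d).edgeSet ≃ Fin (d - 1)) :
    Ktilde (starGraph d) (arrange (starGraph d) σ ρ) ≤ Ktilde T (arrange T π ρ) := by
  have hρ_abs (i) : |ρ i| ≤ 1 := abs_le.2 ⟨(hρ i).1.1.le, (hρ i).1.2.le⟩
  have hρ_sq (i) : ρ i ^ 2 < 1 := (sq_lt_one_iff_abs_lt_one _).2 (abs_lt.2 (hρ i).1)
  have hprod_sq (i j) : (ρ i * ρ j) ^ 2 < ρ i ^ 2 := by
    rw [mul_pow]
    exact mul_lt_of_lt_one_right (pow_two_pos_of_ne_zero (hρ i).2) (hρ_sq j)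
  obtain ⟨u, v, huv, hadj⟩ :=
    SimpleGraph.exists_ne_not_adj_of_colorable hT.colorable_two (by rw [Fintype.card_fin]; omega)
  have hstar_bdd : BddBelow (crossoverRates (starGraph d) (arrange (starGraph d) σ ρ)) := by
    refine ⟨0, fun x hx => ?_⟩
    obtain ⟨i, j, -, b, hb, rfl⟩ := exists_Jt_eq_of_mem_crossoverRates σ hρ_abs hx
    exact Jt_nonneg (hb.trans_lt (hprod_sq i j)) (hρ_sq i)
  refine le_csInf (hT.connected.crossoverRates_nonempty _ huv hadj) fun x hx => ?_
  obtain ⟨i, j, hij, b, hb, rfl⟩ := exists_Jt_eq_of_mem_crossoverRates π hρ_abs hx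
  exact (csInf_le hstar_bdd (Jt_mem_crossoverRates_starGraph (by omega) σ ρ hij)).trans
    (Jt_le_Jt_of_sq_le hb (hprod_sq i j) (hρ_sq i))
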